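/- arXiv:2205.11978 — 8 statements merged into one kernel-verified Lean document; each statement's English description precedes it below -/
import Mathlib

section
/- Let p be a nonprincipal ultrafilter on ℕ which is a P-point (for every f : ℕ → ℕ there is A ∈ p such that the restriction of f to A is finite-to-one or constant), and let q be a nonprincipal ultrafilter on ℕ. Then q ≤_RK p if and only if q ≤_RB p. -/
/-- If `p` is a nonprincipal P-point ultrafilter on `ℕ` (every `f : ℕ → ℕ` is
finite-to-one or constant on some element of `p`) and `q` is a nonprincipal ultrafilter,
then `q ≤_RK p` iff `q ≤_RB p`. -/
theorem rudinKeisler_iff_rudinBlass_of_pPoint (p q : Ultrafilter ℕ)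
    (hp : ∀ n : ℕ, p ≠ pure n) (hq : ∀ n : ℕ, q ≠ pure n)
    (hPpoint : ∀ f : ℕ → ℕ, ∃ A ∈ p,
      (∀ n : ℕ, (A ∩ f ⁻¹' {n}).Finite) ∨ (∃ c : ℕ, ∀ a ∈ A, f a = c)) :
    (∃ f : ℕ → ℕ, Ultrafilter.map f p = q) ↔
    (∃ f : ℕ → ℕ, (∀ n : ℕ, (f ⁻¹' {n}).Finite) ∧ Ultrafilter.map f p = q) := by
  constructor
  · rintro ⟨f, hf⟩
    classical
    obtain ⟨A, hA, hcase⟩ := hPpoint f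
    rcases hcase with hfin | ⟨c, hc⟩
    · refine ⟨fun n => if h : n ∈ A then f n else n, fun m => ?_, ?_⟩
      · apply Set.Finite.subset ((hfin m).union (Set.finite_singleton m))
        intro x hx
        simp only [Set.mem_preimage, Set.mem_singleton_iff] at hx
        by_cases hxA : x ∈ A
        · rw [dif_pos hxA] at hx
          exact Or.inl ⟨hxA, hx⟩
        · rw [dif_neg hxA] at hx
          exact Or.inr hx
      · rw [← hf]
        apply Ultrafilter.coe_injective
        simp only [Ultrafilter.coe_map]
        apply Filter.map_congr
        filter_upwards [Ultrafilter.mem_coe.2 hA] with x hx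
        exact dif_pos hx
    · exfalso
      apply hq c
      have hmem : {c} ∈ Ultrafilter.map f p := by
        apply Filter.mem_of_superset hA
        intro x hx
        simp [hc x hx]
      rw [hf] at hmem
      apply Ultrafilter.coe_injective
      exact q.neBot.eq_pure_iff.2 hmem ▸ rfl
  · rintro ⟨f, _, hf⟩
    exact ⟨f, hf⟩
end

section
/- Let p be an ultrafilter on ℕ which is ω*-discrete: for every function f from ℕ to the subspace ω* of nonprincipal ultrafilters on ℕ, there is A ∈ p such that f '' A is a discrete subspace. Then p is βℕ-discrete: for every function g : ℕ → Ultrafilter ℕ there is A ∈ p such that g '' A is a discrete subspace of the space of ultrafilters on ℕ. -/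
/-!
Split `p` according to whether `g` takes principal or nonprincipal values on a `p`-large set.
Principal ultrafilters are isolated points of `βℕ`, so any set of them is discrete. On the
nonprincipal part, `g` is a map into `ω*` (extended arbitrarily elsewhere), and a discrete subset
of the subspace `ω*` stays discrete in `βℕ`.
-/

/-- The set of nonprincipal ultrafilters on `ℕ` (the Stone–Čech remainder `ω*`). -/
def omegaStar : Set (Ultrafilter ℕ) := {u : Ultrafilter ℕ | ∀ n : ℕ, u ≠ pure n}

open Set Filter Topology

namespace Ultrafilter

variable {α : Type*}

theorem setOf_singleton_mem (a : α) : {u : Ultrafilter α | {a} ∈ u} = {pure a} := by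
  ext u
  refine ⟨fun hu => ?_, fun hu => hu ▸ mem_pure.2 rfl⟩
  obtain ⟨b, rfl, rfl⟩ := eq_pure_of_finite_mem (finite_singleton a) hu
  rfl

theorem isOpen_singleton_pure (a : α) : IsOpen ({pure a} : Set (Ultrafilter α)) :=
  setOf_singleton_mem a ▸ ultrafilter_isOpen_basic {a}

theorem isDiscrete_range_pure : IsDiscrete (range (pure : α → Ultrafilter α)) :=
  isDiscrete_iff_forall_mem_exists_isOpen.2 fun _ ⟨a, ha⟩ =>
    ⟨{pure a}, isOpen_singleton_pure a, by simp [← ha]⟩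

end Ultrafilter

theorem exists_mem_isDiscrete_image_inter_preimage {ι Y : Type*} [TopologicalSpace Y]
    {l : Filter ι} {s : Set Y} (hs : s.Nonempty)
    (h : ∀ f : ι → s, ∃ A ∈ l, DiscreteTopology (f '' A)) (g : ι → Y) :
    ∃ A ∈ l, IsDiscrete (g '' (A ∩ g ⁻¹' s)) := by
  classical
  let f : ι → s := fun i => if hi : g i ∈ s then ⟨g i, hi⟩ else ⟨hs.some, hs.some_mem⟩
  obtain ⟨A, hA, hfA⟩ := h f
  refine ⟨A, hA, ((IsDiscrete.mk hfA).image IsInducing.subtypeVal).mono ?_⟩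
  rintro _ ⟨i, ⟨hiA, hi⟩, rfl⟩
  exact ⟨f i, mem_image_of_mem f hiA, by simp [f, mem_preimage.1 hi]⟩

theorem compl_omegaStar : omegaStarᶜ = range pure := by
  ext u
  simp [omegaStar, eq_comm]

theorem hyperfilter_mem_omegaStar : hyperfilter ℕ ∈ omegaStar := fun n hn =>
  notMem_hyperfilter_of_finite (finite_singleton n) (hn ▸ Ultrafilter.mem_pure.2 rfl)

/-- Any `ω*`-discrete ultrafilter on `ℕ` is `βℕ`-discrete. -/
theorem betaOmega_discrete_of_omegaStar_discrete (p : Ultrafilter ℕ)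
    (h : ∀ f : ℕ → ↥omegaStar, ∃ A ∈ p, DiscreteTopology ↥(f '' A)) :
    ∀ g : ℕ → Ultrafilter ℕ, ∃ A ∈ p, DiscreteTopology ↥(g '' A) := by
  intro g
  rcases p.mem_or_compl_mem (g ⁻¹' omegaStar) with hp | hp
  · obtain ⟨A, hA, hgA⟩ :=
      exists_mem_isDiscrete_image_inter_preimage ⟨_, hyperfilter_mem_omegaStar⟩ h g
    exact ⟨A ∩ g ⁻¹' omegaStar, inter_mem hA hp, hgA.to_subtype⟩
  · refine ⟨_, hp, (Ultrafilter.isDiscrete_range_pure.mono ?_).to_subtype⟩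
    rw [← preimage_compl, compl_omegaStar]
    exact image_preimage_subset g _
end

section
/- Let p be a discrete ultrafilter on ℕ: for every f : ℕ → ℝ there is A ∈ p such that f '' A is a discrete subspace of ℝ. Then for every completely regular Hausdorff topological space X, p is X-discrete: for every f : ℕ → X there is A ∈ p such that f '' A is a discrete subspace of X. -/
universe u

/-!
The range of `f` is a countable Tychonoff space. There a function `φ` into `[0, 1]` separating two
points omits some value `r ∈ (0, 1)`, so `{φ < r}` is clopen and separates them. Countably many
such clopen sets give a continuous injection into Cantor space `ℕ → Bool`, hence into `ℝ`.
Discreteness of `p` applied to `g ∘ f` yields `A ∈ p` with `g '' (f '' A)` discrete, and a map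
that is continuous and injective on `f '' A` reflects discreteness.
-/

open Set

section CountableCompletelyRegular

variable {Y : Type*} [TopologicalSpace Y] [T1Space Y] [CompletelyRegularSpace Y] [Countable Y]

theorem exists_continuous_bool_ne_of_countable {x y : Y} (hxy : x ≠ y) :
    ∃ χ : Y → Bool, Continuous χ ∧ χ x ≠ χ y := by
  obtain ⟨φ, hφc, hφx, hφy⟩ := CompletelyRegularSpace.completely_regular x {y}
    isClosed_singleton hxy
  set ψ : Y → ℝ := fun z => φ z
  have hψc : Continuous ψ := continuous_subtype_val.comp hφc
  obtain ⟨r, hr, hr01⟩ := ((countable_range ψ).dense_compl ℝ).exists_between zero_lt_one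
  have hU : IsClopen (ψ ⁻¹' Iio r) := by
    refine ⟨?_, isOpen_Iio.preimage hψc⟩
    convert isClosed_Iic.preimage hψc using 1
    ext z
    exact (le_iff_lt_or_eq.trans (or_iff_left fun h => hr ⟨z, h⟩)).symm
  refine ⟨(ψ ⁻¹' Iio r).boolIndicator, (continuous_boolIndicator_iff_isClopen _).mpr hU, ?_⟩
  have hx : ψ x < r := by simpa [ψ, hφx] using hr01.1
  have hy : ¬ ψ y < r := by simpa [ψ, hφy rfl] using hr01.2.le
  simp [boolIndicator, hx, hy]

theorem exists_continuous_injective_natBool_of_countable :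
    ∃ G : Y → ℕ → Bool, Continuous G ∧ Function.Injective G := by
  cases isEmpty_or_nonempty Y
  · exact ⟨fun _ _ => false, continuous_const, Function.injective_of_subsingleton _⟩
  obtain ⟨s, hs⟩ := exists_surjective_nat (Y × Y)
  have hsep (q : Y × Y) :
      ∃ χ : Y → Bool, Continuous χ ∧ (q.1 ≠ q.2 → χ q.1 ≠ χ q.2) := by
    by_cases hq : q.1 = q.2
    · exact ⟨fun _ => false, continuous_const, fun h => (h hq).elim⟩
    · obtain ⟨χ, hχc, hχ⟩ := exists_continuous_bool_ne_of_countable hq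
      exact ⟨χ, hχc, fun _ => hχ⟩
  choose χ hχc hχ using hsep
  refine ⟨fun z n => χ (s n) z, continuous_pi fun n => hχc _, fun a b hab => ?_⟩
  by_contra hne
  obtain ⟨n, hn⟩ := hs (a, b)
  exact hχ (s n) (by simpa [hn] using hne) (by simpa [hn] using congrFun hab n)

theorem exists_continuous_injective_real_of_countable :
    ∃ g : Y → ℝ, Continuous g ∧ Function.Injective g := by
  obtain ⟨G, hGc, hGinj⟩ := exists_continuous_injective_natBool_of_countable (Y := Y)
  exact ⟨fun z => cantorSetHomeomorphNatToBool.symm (G z),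
    continuous_subtype_val.comp (cantorSetHomeomorphNatToBool.symm.continuous.comp hGc),
    Subtype.val_injective.comp (cantorSetHomeomorphNatToBool.symm.injective.comp hGinj)⟩

end CountableCompletelyRegular

theorem Set.Countable.exists_continuousOn_injOn_real {X : Type*} [TopologicalSpace X]
    [T1Space X] [CompletelyRegularSpace X] {s : Set X} (hs : s.Countable) :
    ∃ g : X → ℝ, ContinuousOn g s ∧ InjOn g s := by
  have := hs.to_subtype
  obtain ⟨g, hgc, hginj⟩ := exists_continuous_injective_real_of_countable (Y := s)
  classical
  let G : X → ℝ := fun x => if hx : x ∈ s then g ⟨x, hx⟩ else 0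
  have hGs : s.domRestrict G = g := funext fun z => dif_pos z.2
  refine ⟨G, continuousOn_iff_continuous_domRestrict.mpr (hGs ▸ hgc), fun a ha b hb hab => ?_⟩
  simpa using @hginj ⟨a, ha⟩ ⟨b, hb⟩ (by simpa [G, ha, hb] using hab)

theorem DiscreteTopology.of_image {X Z : Type*} [TopologicalSpace X] [TopologicalSpace Z]
    {g : X → Z} {s : Set X} (hgc : ContinuousOn g s) (hginj : InjOn g s)
    [DiscreteTopology (g '' s)] : DiscreteTopology s :=
  .of_continuous_injective (hgc.mapsToRestrict (mapsTo_image g s))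
    ((MapsTo.restrict_inj _).mpr hginj)

/-- Every discrete ultrafilter on `ℕ` (for every `f : ℕ → ℝ` some `A ∈ p` has
`f '' A` discrete) is `X`-discrete for every completely regular Hausdorff space `X`. -/
theorem xDiscrete_of_discrete (p : Ultrafilter ℕ)
    (h : ∀ f : ℕ → ℝ, ∃ A ∈ p, DiscreteTopology ↥(f '' A)) :
    ∀ (X : Type u) [TopologicalSpace X] [T2Space X] [CompletelyRegularSpace X],
      ∀ f : ℕ → X, ∃ A ∈ p, DiscreteTopology ↥(f '' A) := by
  intro X _ _ _ f
  obtain ⟨g, hgc, hginj⟩ := (countable_range f).exists_continuousOn_injOn_real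
  obtain ⟨A, hA, hdisc⟩ := h (g ∘ f)
  rw [image_comp] at hdisc
  have hsub : f '' A ⊆ range f := image_subset_range f A
  exact ⟨A, hA, .of_image (hgc.mono hsub) (hginj.mono hsub)⟩
end

section
/- Suppose that there is no nonprincipal nowhere dense ultrafilter on ℕ, i.e., no nonprincipal ultrafilter p such that for every f : ℕ → ℝ there is A ∈ p with f '' A nowhere dense in ℝ. Then there is no nonprincipal injectively discrete ultrafilter on ℕ, i.e., no nonprincipal ultrafilter p such that for every injective f : ℕ → ℝ there is A ∈ p with f '' A a discrete subspace of ℝ. -/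
open Filter Topology
lemma discrete_isNowhereDense {C : Set ℝ} (hC : DiscreteTopology ↥C) : IsNowhereDense C := by
  unfold IsNowhereDense
  by_contra H
  obtain ⟨x, hx⟩ := Set.nonempty_iff_ne_empty.2 H
  have hVc : interior (closure C) ⊆ closure C := interior_subset
  obtain ⟨c, hcV, hcC⟩ := mem_closure_iff.1 (hVc hx) _ isOpen_interior hx
  have hdisc := (discreteTopology_subtype_iff.1 hC) c hcC
  -- show c ∈ closure (C \ {c})
  have h1 : c ∈ closure (interior (closure C) \ {c}) := by
    rw [mem_closure_iff_nhdsWithin_neBot]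
    have : 𝓝[interior (closure C) \ {c}] c = 𝓝[≠] c := by
      rw [Set.diff_eq, Set.inter_comm, ← nhdsWithin_restrict' _ (isOpen_interior.mem_nhds hcV)]
    rw [this]
    infer_instance
  have h2 : interior (closure C) \ {c} ⊆ closure (C \ {c}) := by
    intro y ⟨hy1, hy2⟩
    have : y ∈ closure C := hVc hy1
    rw [show C = (C \ {c}) ∪ {c} from (Set.diff_union_of_subset (Set.singleton_subset_iff.2 hcC)).symm,
      closure_union, closure_singleton] at this
    rcases this with h | h
    · exact h
    · exact absurd h hy2
  have h3 : c ∈ closure (C \ {c}) := closure_minimal h2 isClosed_closure h1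
  rw [mem_closure_iff_nhdsWithin_neBot] at h3
  have hle : 𝓝[C \ {c}] c ≤ 𝓝[≠] c ⊓ 𝓟 C :=
    le_inf (nhdsWithin_mono _ (fun y hy => hy.2)) (le_trans (nhdsWithin_mono _ Set.diff_subset)
      (le_principal_iff.2 self_mem_nhdsWithin))
  exact h3.ne (le_bot_iff.1 (hdisc ▸ hle))

lemma exists_good_t (f : ℕ → ℝ) (r : ℕ → ℝ) (hr : Function.Injective r) :
    ∃ t : ℝ, ∀ n m : ℕ, n ≠ m → f n + t * r n ≠ f m + t * r m := by
  by_contra H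
  push_neg at H
  have hcov : (Set.univ : Set ℝ) ⊆ ⋃ q : ℕ × ℕ,
      {t : ℝ | q.1 ≠ q.2 ∧ f q.1 + t * r q.1 = f q.2 + t * r q.2} := by
    intro t _
    obtain ⟨n, m, hnm, he⟩ := H t
    exact Set.mem_iUnion.2 ⟨(n, m), hnm, he⟩
  have hcount : (⋃ q : ℕ × ℕ,
      {t : ℝ | q.1 ≠ q.2 ∧ f q.1 + t * r q.1 = f q.2 + t * r q.2}).Countable := by
    refine Set.countable_iUnion fun q => Set.Subsingleton.countable ?_
    rintro t1 ⟨hq, h1⟩ t2 ⟨_, h2⟩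
    have hrne : r q.1 - r q.2 ≠ 0 := sub_ne_zero.2 fun hh => hq (hr hh)
    have e1 : t1 * (r q.1 - r q.2) = f q.2 - f q.1 := by ring_nf; linarith
    have e2 : t2 * (r q.1 - r q.2) = f q.2 - f q.1 := by ring_nf; linarith
    have := e1.trans e2.symm
    exact mul_right_cancel₀ hrne this
  exact Cardinal.not_countable_real (hcount.mono hcov)

/-- If there is no nonprincipal nowhere dense ultrafilter on `ℕ`, then there is
no nonprincipal injectively discrete ultrafilter on `ℕ`. -/
theorem no_injectively_discrete_of_no_nowhere_dense
    (h : ¬ ∃ p : Ultrafilter ℕ, (∀ n : ℕ, p ≠ pure n) ∧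
      ∀ f : ℕ → ℝ, ∃ A ∈ p, IsNowhereDense (f '' A)) :
    ¬ ∃ p : Ultrafilter ℕ, (∀ n : ℕ, p ≠ pure n) ∧
      ∀ f : ℕ → ℝ, Function.Injective f → ∃ A ∈ p, DiscreteTopology ↥(f '' A) := by
  rintro ⟨p, hnp, hdisc⟩
  refine h ⟨p, hnp, fun f => ?_⟩
  set r : ℕ → ℝ := fun n => (1/3 : ℝ) ^ n with hrdef
  have hrpos : ∀ n, 0 < r n := fun n => pow_pos (by norm_num) n
  have hranti : StrictAnti r := pow_right_strictAnti₀ (by norm_num) (by norm_num)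
  have hrinj : Function.Injective r := hranti.injective
  obtain ⟨t, ht⟩ := exists_good_t f r hrinj
  set g : ℕ → ℝ := fun n => f n + t * r n with hgdef
  have hginj : Function.Injective g := by
    intro n m hnm
    by_contra hne
    exact ht n m hne hnm
  obtain ⟨A, hA, hAd⟩ := hdisc g hginj
  refine ⟨A, hA, ?_⟩
  have hgnd : IsNowhereDense (g '' A) := discrete_isNowhereDense hAd
  have hsub : closure (f '' A) ⊆ closure (g '' A) ∪ f '' A := by
    intro x hx
    by_cases hxf : x ∈ f '' A
    · exact Or.inr hxf
    left
    rw [Metric.mem_closure_iff]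
    intro ε hε
    obtain ⟨N, hN⟩ := exists_pow_lt_of_lt_one
      (show (0:ℝ) < ε/2/(|t|+1) by positivity) (show (1/3:ℝ) < 1 by norm_num)
    have habs : (0:ℝ) < |t| + 1 := by positivity
    have hNt : |t| * r N < ε/2 := by
      calc |t| * r N ≤ (|t|+1) * r N := by nlinarith [hrpos N, abs_nonneg t]
      _ < (|t|+1) * (ε/2/(|t|+1)) := (mul_lt_mul_iff_right₀ habs).2 hN
      _ = ε/2 := by field_simp
    have hsplit : f '' A = f '' (A ∩ {n | n < N}) ∪ f '' (A ∩ {n | N ≤ n}) := by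
      rw [← Set.image_union, ← Set.inter_union_distrib_left,
        show {n : ℕ | n < N} ∪ {n : ℕ | N ≤ n} = Set.univ from by
          ext n; simp [Nat.lt_or_ge], Set.inter_univ]
    have hfin : (f '' (A ∩ {n | n < N})).Finite :=
      Set.Finite.image _ (Set.Finite.inter_of_right (Set.finite_lt_nat N) A)
    have hx2 : x ∈ closure (f '' (A ∩ {n | N ≤ n})) := by
      rw [hsplit, closure_union, hfin.isClosed.closure_eq] at hx
      rcases hx with hx | hx
      · exact absurd (hsplit ▸ Set.mem_union_left _ hx) hxf
      · exact hx
    obtain ⟨y, hy, hdy⟩ := Metric.mem_closure_iff.1 hx2 (ε/2) (by positivity)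
    obtain ⟨m, ⟨hmA, hmN⟩, hmy⟩ := hy
    refine ⟨g m, Set.mem_image_of_mem g hmA, ?_⟩
    have hdist : dist (f m) (g m) ≤ |t| * r N := by
      rw [Real.dist_eq]
      have : f m - g m = -(t * r m) := by simp [hgdef]
      rw [this, abs_neg, abs_mul, abs_of_pos (hrpos m)]
      exact mul_le_mul_of_nonneg_left (hranti.antitone hmN) (abs_nonneg t)
    have h1 : dist x (f m) < ε/2 := by rw [hmy]; exact hdy
    calc dist x (g m) ≤ dist x (f m) + dist (f m) (g m) := dist_triangle _ _ _
      _ < ε := by linarith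
  have hcnt : (f '' A).Countable := Set.Countable.image (Set.to_countable A) f
  have hfint : interior (f '' A) = ∅ := by
    rw [interior_eq_empty_iff_dense_compl]
    exact hcnt.dense_compl ℝ
  unfold IsNowhereDense
  have hU1 : interior (closure (f '' A)) \ closure (g '' A) = ∅ := by
    rw [← Set.subset_empty_iff, ← hfint]
    refine interior_maximal ?_ (isOpen_interior.sdiff isClosed_closure)
    intro y ⟨hy1, hy2⟩
    rcases hsub (interior_subset hy1) with hy | hy
    · exact absurd hy hy2
    · exact hy
  have hU2 : interior (closure (f '' A)) ⊆ closure (g '' A) :=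
    Set.diff_eq_empty.1 hU1
  rw [← Set.subset_empty_iff, ← hgnd]
  exact interior_maximal hU2 isOpen_interior
end

section
/- Let p and q be nonprincipal ultrafilters on ℕ and consider the tensor product p ⊗ q as an ultrafilter on ℕ × ℕ. Then the set D = {(pure n) ⊗ q : n ∈ ℕ} is a countable discrete subspace of the space of ultrafilters on ℕ × ℕ consisting of nonprincipal ultrafilters, p ⊗ q ∉ D, and p ⊗ q ∈ closure(D). In particular, p ⊗ q is not a discretely weak P-point of the subspace of nonprincipal ultrafilters on ℕ × ℕ. -/
open Filter Topology

/-- The tensor (Fubini) product of two ultrafilters on `ℕ`, as an ultrafilter on `ℕ × ℕ`. -/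
def tensorProd (p q : Ultrafilter ℕ) : Ultrafilter (ℕ × ℕ) :=
  p.bind (fun n => q.map (Prod.mk n))

/-- The set of nonprincipal ultrafilters on `ℕ × ℕ`. -/
def omegaStar2 : Set (Ultrafilter (ℕ × ℕ)) :=
  {u : Ultrafilter (ℕ × ℕ) | ∀ s : ℕ × ℕ, u ≠ pure s}

/-!
The two coordinate projections send `p ⊗ q` to `p` and `q`. Hence `p ⊗ q` is nonprincipal
because `q` is, and it is none of the `pure n ⊗ q` because `p` is nonprincipal. The map
`n ↦ pure n ⊗ q` is an embedding of `ℕ`, since its composite with the first projection is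
`pure`, so its range is discrete. Finally `p ⊗ q = p.bind (n ↦ pure n ⊗ q)`, and a basic open
set `{u | A ∈ u}` containing `p.bind g` contains `g n` for some `n`.
-/

namespace Ultrafilter

variable {α β : Type*}

theorem continuous_map (f : α → β) : Continuous (Ultrafilter.map f) := by
  refine continuous_generateFrom_iff.mpr ?_
  rintro _ ⟨s, rfl⟩
  exact ultrafilter_isOpen_basic (f ⁻¹' s)

theorem map_fst_bind_map_prodMk (p : Ultrafilter α) (q : Ultrafilter β) :
    (p.bind fun a => q.map (Prod.mk a)).map Prod.fst = p := by
  ext s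
  show (∀ᶠ a in (p : Filter α), ∀ᶠ _ in (q : Filter β), a ∈ s) ↔ s ∈ p
  simp only [eventually_const]
  rfl

theorem map_snd_bind_map_prodMk (p : Ultrafilter α) (q : Ultrafilter β) :
    (p.bind fun a => q.map (Prod.mk a)).map Prod.snd = q := by
  ext s
  show (∀ᶠ _ in (p : Filter α), ∀ᶠ b in (q : Filter β), b ∈ s) ↔ s ∈ q
  rw [eventually_const]
  rfl

theorem bind_mem_closure_range (p : Ultrafilter α) (g : α → Ultrafilter β) :
    p.bind g ∈ closure (Set.range g) := by
  rw [ultrafilterBasis_is_basis.mem_closure_iff]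
  rintro _ ⟨s, rfl⟩ hs
  obtain ⟨a, ha⟩ := p.nonempty_of_mem hs
  exact ⟨g a, ha, a, rfl⟩

end Ultrafilter

theorem map_fst_tensorProd (p q : Ultrafilter ℕ) : (tensorProd p q).map Prod.fst = p :=
  Ultrafilter.map_fst_bind_map_prodMk p q

theorem map_snd_tensorProd (p q : Ultrafilter ℕ) : (tensorProd p q).map Prod.snd = q :=
  Ultrafilter.map_snd_bind_map_prodMk p q

theorem tensorProd_pure_left (n : ℕ) (q : Ultrafilter ℕ) :
    tensorProd (pure n) q = q.map (Prod.mk n) :=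
  Ultrafilter.ext fun _ => Iff.rfl

theorem tensorProd_ne_pure (p : Ultrafilter ℕ) {q : Ultrafilter ℕ} (hq : ∀ n, q ≠ pure n)
    (s : ℕ × ℕ) : tensorProd p q ≠ pure s := by
  intro h
  apply hq s.2
  rw [← map_snd_tensorProd p q, h, Ultrafilter.map_pure]

theorem tensorProd_notMem_range {p : Ultrafilter ℕ} (hp : ∀ n, p ≠ pure n) (q : Ultrafilter ℕ) :
    tensorProd p q ∉ Set.range fun n => tensorProd (pure n) q := by
  rintro ⟨n, hn⟩
  apply hp n
  rw [← map_fst_tensorProd p q, ← hn, map_fst_tensorProd]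

theorem tensorProd_mem_closure_range (p q : Ultrafilter ℕ) :
    tensorProd p q ∈ closure (Set.range fun n => tensorProd (pure n) q) := by
  simp only [tensorProd_pure_left]
  exact p.bind_mem_closure_range _

theorem isInducing_tensorProd_pure_left (q : Ultrafilter ℕ) :
    IsInducing fun n => tensorProd (pure n) q := by
  refine .of_comp continuous_of_discreteTopology (Ultrafilter.continuous_map Prod.fst) ?_
  have h : (Ultrafilter.map Prod.fst ∘ fun n => tensorProd (pure n) q) = pure :=
    funext fun n => map_fst_tensorProd (pure n) q
  rw [h]
  exact isDenseInducing_pure.isInducing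

theorem discreteTopology_range_tensorProd_pure_left (q : Ultrafilter ℕ) :
    DiscreteTopology (Set.range fun n => tensorProd (pure n) q) :=
  isDiscrete_iff_discreteTopology.mp (isInducing_tensorProd_pure_left q).isDiscrete_range

theorem exists_subtype_countable_discrete_mem_closure {X : Type*} [TopologicalSpace X]
    {S D : Set X} (hDS : D ⊆ S) (hD : D.Countable) [DiscreteTopology D] {x : X} (hx : x ∈ S)
    (hxD : x ∉ D) (hxcl : x ∈ closure D) :
    ∃ D' : Set S, D'.Countable ∧ DiscreteTopology D' ∧ ⟨x, hx⟩ ∉ D' ∧ ⟨x, hx⟩ ∈ closure D' := by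
  refine ⟨Subtype.val ⁻¹' D, hD.preimage Subtype.val_injective, ?_, hxD, ?_⟩
  · exact isDiscrete_iff_discreteTopology.mp <|
      (isDiscrete_iff_discreteTopology.mpr ‹_›).preimage continuous_subtype_val.continuousOn
        Subtype.val_injective
  · rwa [closure_subtype, Subtype.image_preimage_coe, Set.inter_eq_right.mpr hDS]

/-- For nonprincipal `p`, `q`, the set `D = {pure n ⊗ q : n ∈ ℕ}` is a
countable discrete set of nonprincipal ultrafilters on `ℕ × ℕ` with `p ⊗ q ∉ D` and
`p ⊗ q ∈ closure D`; in particular `p ⊗ q` is nonprincipal and is not a discretely weak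
P-point of the subspace of nonprincipal ultrafilters on `ℕ × ℕ`. -/
theorem tensorProd_not_discretelyWeakPPoint (p q : Ultrafilter ℕ)
    (hp : ∀ n : ℕ, p ≠ pure n) (hq : ∀ n : ℕ, q ≠ pure n) :
    (∀ s : ℕ × ℕ, tensorProd p q ≠ pure s) ∧
    (Set.range fun n : ℕ => tensorProd (pure n) q).Countable ∧
    (∀ r ∈ Set.range fun n : ℕ => tensorProd (pure n) q, ∀ s : ℕ × ℕ, r ≠ pure s) ∧
    DiscreteTopology ↥(Set.range fun n : ℕ => tensorProd (pure n) q) ∧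
    tensorProd p q ∉ (Set.range fun n : ℕ => tensorProd (pure n) q) ∧
    tensorProd p q ∈ closure (Set.range fun n : ℕ => tensorProd (pure n) q) ∧
    ∀ hnp : ∀ s : ℕ × ℕ, tensorProd p q ≠ pure s,
      ∃ D : Set ↥omegaStar2, D.Countable ∧ DiscreteTopology ↥D ∧
        (⟨tensorProd p q, hnp⟩ : ↥omegaStar2) ∉ D ∧
        (⟨tensorProd p q, hnp⟩ : ↥omegaStar2) ∈ closure D := by
  have hD : Set.range (fun n => tensorProd (pure n) q) ⊆ omegaStar2 :=
    Set.range_subset_iff.mpr fun n => tensorProd_ne_pure (pure n) hq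
  have hdisc := discreteTopology_range_tensorProd_pure_left q
  exact ⟨tensorProd_ne_pure p hq, Set.countable_range _, hD, hdisc,
    tensorProd_notMem_range hp q, tensorProd_mem_closure_range p q,
    fun hnp => exists_subtype_countable_discrete_mem_closure hD (Set.countable_range _) hnp
      (tensorProd_notMem_range hp q) (tensorProd_mem_closure_range p q)⟩
end

section
/- (a) Every completely regular Hausdorff R₃-space is a βω-space. (b) Every compact Hausdorff βω-space is an R₃-space. -/
/-!
(a) Let `f` be bounded on a countable discrete set `D` whose closure `K` is compact. At a point
of `K`, two distinct cluster values `s ≠ t` of `f` would make the preimages of disjoint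
neighbourhoods of `s` and `t` two countable discrete subsets of `D`, separated because `D` is
discrete, whose closures share that point; so in an R₃-space `f` converges at every point of `K`
and extends continuously to `K`. As `K` is a closed copy of itself in the normal space `βX`,
Tietze extends the result to `X`.

(b) For separated countable discrete `A` and `B`, the union `A ∪ B` is again countable and
discrete, and its closure is compact. Extending the function that is `0` on `A` and `1` on `B`
separates the closures of `A` and `B`.
-/

universe u

/-- A subset `D` of `X` is C*-embedded if every bounded continuous real-valued function on
`D` extends continuously to `X`. -/
def CStarEmbedded {X : Type*} [TopologicalSpace X] (D : Set X) : Prop :=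
  ∀ f : C(↥D, ℝ), (∃ M : ℝ, ∀ d : ↥D, |f d| ≤ M) →
    ∃ g : C(X, ℝ), ∀ d : ↥D, g ↑d = f d

/-- `X` is an R₃-space: any two separated countable discrete subsets of `X` have disjoint
closures. -/
def IsR3Space (X : Type*) [TopologicalSpace X] : Prop :=
  ∀ A B : Set X, A.Countable → B.Countable →
    DiscreteTopology ↥A → DiscreteTopology ↥B →
    closure A ∩ B = ∅ → A ∩ closure B = ∅ → closure A ∩ closure B = ∅

/-- `X` is a βω-space (van Douwen): every countable discrete subset of `X` with compact
closure is C*-embedded in `X`. -/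
def IsBetaOmegaSpace (X : Type*) [TopologicalSpace X] : Prop :=
  ∀ D : Set X, D.Countable → DiscreteTopology ↥D → IsCompact (closure D) →
    CStarEmbedded D

universe v

open Set Filter Topology

section Discrete

variable {X : Type*} [TopologicalSpace X]

theorem closure_inter_eq_empty_of_discreteTopology {D A B : Set X} (hD : DiscreteTopology D)
    (hAD : A ⊆ D) (hBD : B ⊆ D) (hAB : Disjoint A B) : closure A ∩ B = ∅ := by
  refine eq_empty_of_forall_notMem fun x ⟨hxA, hxB⟩ => ?_
  have hA : A ⊆ {x}ᶜ ∩ D := fun a ha =>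
    ⟨fun hax => hAB.notMem_of_mem_left ha (hax ▸ hxB), hAD ha⟩
  have hbot : 𝓝 x ⊓ 𝓟 A = ⊥ := by
    refine le_bot_iff.mp ?_
    calc 𝓝 x ⊓ 𝓟 A ≤ 𝓝[≠] x ⊓ 𝓟 D := by
          rw [nhdsWithin, inf_assoc, inf_principal]; exact inf_le_inf_left _ (principal_mono.2 hA)
      _ = ⊥ := discreteTopology_subtype_iff.mp hD x (hBD hxB)
  exact (mem_closure_iff_clusterPt.mp hxA).ne hbot

theorem discreteTopology_union_of_separated {A B : Set X} (hA : DiscreteTopology A)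
    (hB : DiscreteTopology B) (hAB : closure A ∩ B = ∅) (hBA : A ∩ closure B = ∅) :
    DiscreteTopology ↥(A ∪ B) := by
  have key : ∀ {A B : Set X}, DiscreteTopology A → A ∩ closure B = ∅ →
      ∀ x ∈ A, 𝓝[≠] x ⊓ 𝓟 (A ∪ B) = ⊥ := by
    intro A B hA hBA x hx
    have hxB : 𝓝 x ⊓ 𝓟 B = ⊥ := by
      by_contra h
      exact (eq_empty_iff_forall_notMem.mp hBA) x ⟨hx, mem_closure_iff_clusterPt.mpr ⟨h⟩⟩
    rw [← sup_principal, inf_sup_left, discreteTopology_subtype_iff.mp hA x hx, bot_sup_eq]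
    exact le_bot_iff.mp (hxB ▸ inf_le_inf_right _ nhdsWithin_le_nhds)
  refine discreteTopology_subtype_iff.mpr fun x hx => hx.elim (key hA hBA x) fun hxB => ?_
  rw [union_comm]
  exact key hB (by rw [inter_comm, hAB]) x hxB

end Discrete

theorem ContinuousMap.exists_restrict_eq_of_isCompact {X : Type u} {Y : Type v}
    [TopologicalSpace X] [T35Space X] [TopologicalSpace Y] [TietzeExtension.{u, v} Y]
    {K : Set X} (hK : IsCompact K) (g : C(K, Y)) : ∃ G : C(X, Y), G.restrict K = g := by
  have : CompactSpace K := isCompact_iff_compactSpace.mp hK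
  have he : IsClosedEmbedding (stoneCechUnit ∘ ((↑) : K → X)) :=
    (continuous_stoneCechUnit.comp continuous_subtype_val).isClosedEmbedding
      (injective_stoneCechUnit_of_t35Space.comp Subtype.val_injective)
  obtain ⟨G, hG⟩ := g.exists_extension he
  exact ⟨G.comp ⟨stoneCechUnit, continuous_stoneCechUnit⟩, hG⟩

section R3

variable {X Y : Type*} [TopologicalSpace X] [TopologicalSpace Y] [T2Space Y]

theorem IsR3Space.eq_of_mapClusterPt (hX : IsR3Space X) {D : Set X} (hDc : D.Countable)
    (hD : DiscreteTopology D) {F : X → Y} {x : X} {s t : Y}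
    (hs : MapClusterPt s (𝓝[D] x) F) (ht : MapClusterPt t (𝓝[D] x) F) : s = t := by
  by_contra hst
  obtain ⟨S, T, hS, hT, hsS, htT, hST⟩ := t2_separation hst
  have mem_closure {u : Y} {U : Set Y} (hu : MapClusterPt u (𝓝[D] x) F) (hU : U ∈ 𝓝 u) :
      x ∈ closure (D ∩ F ⁻¹' U) :=
    mem_closure_iff_frequently.mpr <|
      (frequently_nhdsWithin_iff.mp (hu.frequently hU)).mono fun _ h => ⟨h.2, h.1⟩
  have hdisj : Disjoint (D ∩ F ⁻¹' S) (D ∩ F ⁻¹' T) :=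
    (hST.preimage F).mono inter_subset_right inter_subset_right
  have hsub {U : Set Y} : D ∩ F ⁻¹' U ⊆ D := inter_subset_left
  have hR3 := hX _ _ (hDc.mono hsub) (hDc.mono hsub) (hD.of_subset hsub) (hD.of_subset hsub)
    (closure_inter_eq_empty_of_discreteTopology hD hsub hsub hdisj)
    (by rw [inter_comm]
        exact closure_inter_eq_empty_of_discreteTopology hD hsub hsub hdisj.symm)
  exact (eq_empty_iff_forall_notMem.mp hR3) x
    ⟨mem_closure hs (hS.mem_nhds hsS), mem_closure ht (hT.mem_nhds htT)⟩

theorem IsR3Space.exists_tendsto_nhdsWithin (hX : IsR3Space X) {D : Set X} (hDc : D.Countable)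
    (hD : DiscreteTopology D) {F : X → Y} {s : Set Y} (hs : IsCompact s) (hF : MapsTo F D s)
    {x : X} (hx : x ∈ closure D) : ∃ y, Tendsto F (𝓝[D] x) (𝓝 y) := by
  have : (𝓝[D] x).NeBot := mem_closure_iff_nhdsWithin_neBot.mp hx
  have hmem : ∀ᶠ z in 𝓝[D] x, F z ∈ s := eventually_nhdsWithin_of_forall hF
  obtain ⟨y, -, hy⟩ := hs.exists_mapClusterPt (tendsto_principal.mpr hmem)
  exact ⟨y, hs.tendsto_nhds_of_unique_mapClusterPt hmem
    fun z _ hz => hX.eq_of_mapClusterPt hDc hD hz hy⟩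

end R3

theorem IsR3Space.isBetaOmegaSpace {X : Type u} [TopologicalSpace X] [T35Space X]
    (hX : IsR3Space X) : IsBetaOmegaSpace X := by
  classical
  intro D hDc hD hK f ⟨M, hM⟩
  set F : X → ℝ := fun x => if h : x ∈ D then f ⟨x, h⟩ else 0
  have hFD (d : D) : F d = f d := dif_pos d.2
  have hFM : MapsTo F D (Icc (-M) M) := fun x hx => abs_le.mp (hFD ⟨x, hx⟩ ▸ hM ⟨x, hx⟩)
  have hFcont : ContinuousOn F D := continuousOn_iff_continuous_domRestrict.mpr
    continuous_of_discreteTopology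
  have hext : ContinuousOn (extendFrom D F) (closure D) := continuousOn_extendFrom subset_rfl
    fun x hx => hX.exists_tendsto_nhdsWithin hDc hD isCompact_Icc hFM hx
  obtain ⟨G, hG⟩ := ContinuousMap.exists_restrict_eq_of_isCompact hK ⟨_, hext.domRestrict⟩
  refine ⟨G, fun d => ?_⟩
  have := congr($hG ⟨d, subset_closure d.2⟩)
  simp only [ContinuousMap.restrict_apply, ContinuousMap.coe_mk, domRestrict_apply] at this
  rw [this, extendFrom_extends hFcont d d.2, hFD]

theorem IsBetaOmegaSpace.isR3Space {X : Type*} [TopologicalSpace X] [CompactSpace X]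
    (hX : IsBetaOmegaSpace X) : IsR3Space X := by
  classical
  intro A B hAc hBc hA hB hAB hBA
  have hD := discreteTopology_union_of_separated hA hB hAB hBA
  obtain ⟨g, hg⟩ := hX (A ∪ B) (hAc.union hBc) hD isClosed_closure.isCompact
    ⟨fun d => if (d : X) ∈ B then 1 else 0, continuous_of_discreteTopology⟩
    ⟨1, fun d => by simp only [ContinuousMap.coe_mk]; split_ifs <;> norm_num⟩
  have hgA : closure A ⊆ g ⁻¹' {0} := by
    refine closure_minimal (fun x hx => ?_) (isClosed_singleton.preimage g.continuous)
    have hxB : x ∉ B := fun hxB =>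
      (eq_empty_iff_forall_notMem.mp hBA) x ⟨hx, subset_closure hxB⟩
    simpa [hxB] using hg ⟨x, Or.inl hx⟩
  have hgB : closure B ⊆ g ⁻¹' {1} :=
    closure_minimal (fun x hx => by simpa [hx] using hg ⟨x, Or.inr hx⟩)
      (isClosed_singleton.preimage g.continuous)
  exact eq_empty_of_forall_notMem fun x hx => zero_ne_one <|
    (hgA hx.1 : g x = 0).symm.trans (hgB hx.2)

/-- (a) every completely regular Hausdorff R₃-space is a βω-space;
(b) every compact Hausdorff βω-space is an R₃-space. -/
theorem r3_betaOmega_relations :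
    (∀ (X : Type u) [TopologicalSpace X] [T2Space X] [CompletelyRegularSpace X],
      IsR3Space X → IsBetaOmegaSpace X) ∧
    (∀ (X : Type u) [TopologicalSpace X] [T2Space X] [CompactSpace X],
      IsBetaOmegaSpace X → IsR3Space X) :=
  ⟨fun X _ _ _ hX => have : T35Space X := ⟨⟩; hX.isBetaOmegaSpace,
    fun _ _ _ _ hX => hX.isR3Space⟩
end

section
/- Let X be a compact Hausdorff R₂-space. Let p be a nonprincipal ultrafilter on ℕ which is a weak P-point of the subspace ω* of nonprincipal ultrafilters on ℕ, and let q be a nonprincipal ultrafilter on ℕ. Suppose x ∈ X, (d_m) is an injective sequence in X whose range is a discrete subspace, (e_n) is any sequence in X, x is the p-limit of (d_m) and also the q-limit of (e_n), and {n : e_n = x} ∉ q. Then p ≤_RK q. -/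
/-!
Because `d` is discrete and `X` is R₂, the sets `d '' A` and `d '' Aᶜ` have disjoint closures, so
along every ultrafilter `u` with `d → y` the sets of `u` are exactly the `A` with
`y ∈ closure (d '' A)`; for `y = x` this ultrafilter is `p`, and `y ↦ u` is continuous at `x`.
If `q`-many `e n` lie in `closure (range d) \ range d` and differ from `x`, their ultrafilters are
points of `ω* \ {p}` converging to `p` along `q`, which a weak P-point forbids. Otherwise
`q`-almost every `e n` lies in `range d` or outside `closure (range d)`. Separate the `d a` by
pairwise disjoint open sets `W a` (compact Hausdorff spaces are regular) and let `g n` be the `a`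
with `e n ∈ W a`: for `A ∈ p`, the sets `d '' A` and `{e n | g n ∉ A}` are separated and both
accumulate at `x`, so R₂ forces `g ⁻¹' A ∈ q`, that is `map g q = p`.
-/

open Filter Topology

/-- `X` is an R₂-space: any two separated countable subsets of `X`, at least one of which
is discrete, have disjoint closures. -/
def IsR2Space (X : Type*) [TopologicalSpace X] : Prop :=
  ∀ A B : Set X, A.Countable → B.Countable → DiscreteTopology ↥A →
    closure A ∩ B = ∅ → A ∩ closure B = ∅ → closure A ∩ closure B = ∅

section

open Set Function

variable {X : Type*} [TopologicalSpace X]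

def IsWeakPPoint (y : X) : Prop :=
  ∀ D : Set X, D.Countable → y ∉ D → y ∉ closure D

theorem mem_closure_image_of_tendsto {α : Type*} {f : α → X} {l : Filter α} [l.NeBot] {y : X}
    (hf : Tendsto f l (𝓝 y)) {s : Set α} (hs : s ∈ l) : y ∈ closure (f '' s) :=
  mem_closure_of_tendsto hf (mem_of_superset hs fun _ => mem_image_of_mem f)

theorem IsWeakPPoint.not_tendsto {y : X} (hy : IsWeakPPoint y) {ι : Type*} [Countable ι]
    {l : Filter ι} [l.NeBot] {v : ι → X} (hne : ∀ᶠ i in l, v i ≠ y) : ¬Tendsto v l (𝓝 y) :=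
  fun hv => hy (v '' {i | v i ≠ y}) ((to_countable _).image v)
    (by rintro ⟨i, hi, rfl⟩; exact hi rfl) (mem_closure_image_of_tendsto hv hne)

theorem exists_tendsto_omegaStar [T1Space X] {d : ℕ → X} {y : X}
    (hy : y ∈ closure (range d) \ range d) :
    ∃ u : omegaStar, Tendsto d (u : Ultrafilter ℕ) (𝓝 y) := by
  have : (comap d (𝓝 y)).NeBot := comap_neBot_iff_compl_range.2 fun h => by
    obtain ⟨_, hc, hr⟩ := mem_closure_iff_nhds.1 hy.1 _ h
    exact hc hr
  refine ⟨⟨Ultrafilter.of (comap d (𝓝 y)), fun k hk => hy.2 ⟨k, ?_⟩⟩,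
    tendsto_iff_comap.2 (Ultrafilter.of_le _)⟩
  have := tendsto_iff_comap.2 (Ultrafilter.of_le (comap d (𝓝 y)))
  rw [hk, Ultrafilter.coe_pure, Tendsto, map_pure] at this
  exact pure_le_nhds_iff.1 this

variable {d : ℕ → X}

theorem apply_mem_closure_image_iff (hd_inj : Injective d) (hd_disc : DiscreteTopology (range d))
    {A : Set ℕ} {k : ℕ} : d k ∈ closure (d '' A) ↔ k ∈ A := by
  refine ⟨fun hk => ?_, fun hk => subset_closure (mem_image_of_mem d hk)⟩
  obtain ⟨U, hU, hUd⟩ := discreteTopology_subtype_iff'.1 hd_disc (d k) (mem_range_self k)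
  obtain ⟨_, hyU, a, ha, rfl⟩ := mem_closure_iff.1 hk U hU (hUd.symm.subset rfl).1
  exact hd_inj (hUd.subset ⟨hyU, mem_range_self a⟩) ▸ ha

theorem disjoint_closure_image_image (hd_inj : Injective d)
    (hd_disc : DiscreteTopology (range d)) {A B : Set ℕ} (hAB : Disjoint A B) :
    Disjoint (closure (d '' A)) (d '' B) := by
  rw [disjoint_right]
  rintro _ ⟨b, hb, rfl⟩
  exact (apply_mem_closure_image_iff hd_inj hd_disc).not.2 (disjoint_right.1 hAB hb)

theorem exists_isOpen_pairwise_disjoint [RegularSpace X] (hd_inj : Injective d)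
    (hd_disc : DiscreteTopology (range d)) :
    ∃ W : ℕ → Set X, (∀ a, IsOpen (W a)) ∧ (∀ a, d a ∈ W a) ∧ Pairwise (Disjoint on W) := by
  have hV : ∀ a, ∃ V, IsOpen V ∧ d a ∈ V ∧ ∀ j ≠ a, d j ∉ closure V := by
    intro a
    obtain ⟨t, ht, htc, hts⟩ := exists_mem_nhds_isClosed_subset <|
      isClosed_closure.isOpen_compl.mem_nhds <|
        (apply_mem_closure_image_iff hd_inj hd_disc).not.2 (notMem_compl_iff.2 (mem_singleton a))
    refine ⟨interior t, isOpen_interior, mem_interior_iff_mem_nhds.2 ht, fun j hj hjt => ?_⟩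
    exact hts (closure_minimal interior_subset htc hjt)
      (subset_closure (mem_image_of_mem d (mem_compl_singleton_iff.2 hj)))
  choose V hVo hdV hV using hV
  refine ⟨fun a => V a \ ⋃ j < a, closure (V j),
    fun a => (hVo a).sdiff ((finite_Iio a).isClosed_biUnion fun _ _ => isClosed_closure),
    fun a => ⟨hdV a, ?_⟩, ?_⟩
  · simp only [mem_iUnion]
    rintro ⟨j, hj, h⟩
    exact hV j a hj.ne' h
  · exact (pairwise_disjoint_on _).2 fun m n hmn => disjoint_left.2 fun y hym hyn =>
      hyn.2 (mem_iUnion₂.2 ⟨m, hmn, subset_closure hym.1⟩)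

namespace IsR2Space

theorem disjoint_closure_image (hX : IsR2Space X) (hd_disc : DiscreteTopology (range d))
    {e : ℕ → X} {A B : Set ℕ}
    (h₁ : Disjoint (closure (d '' A)) (e '' B)) (h₂ : Disjoint (d '' A) (closure (e '' B))) :
    Disjoint (closure (d '' A)) (closure (e '' B)) := by
  simp only [disjoint_iff_inter_eq_empty] at *
  exact hX _ _ (A.to_countable.image d) (B.to_countable.image e)
    (.of_subset hd_disc (image_subset_range d A)) h₁ h₂

theorem disjoint_closure_image_of_disjoint (hX : IsR2Space X) (hd_inj : Injective d)
    (hd_disc : DiscreteTopology (range d)) {A B : Set ℕ} (hAB : Disjoint A B) :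
    Disjoint (closure (d '' A)) (closure (d '' B)) :=
  hX.disjoint_closure_image hd_disc (disjoint_closure_image_image hd_inj hd_disc hAB)
    (disjoint_closure_image_image hd_inj hd_disc hAB.symm).symm

theorem mem_iff_mem_closure_image (hX : IsR2Space X) (hd_inj : Injective d)
    (hd_disc : DiscreteTopology (range d)) {u : Ultrafilter ℕ} {y : X}
    (hu : Tendsto d u (𝓝 y)) (A : Set ℕ) : A ∈ u ↔ y ∈ closure (d '' A) := by
  refine ⟨mem_closure_image_of_tendsto hu, fun hy => ?_⟩
  by_contra hA
  exact disjoint_left.1 (hX.disjoint_closure_image_of_disjoint hd_inj hd_disc disjoint_compl_right)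
    hy (mem_closure_image_of_tendsto hu (Ultrafilter.compl_mem_iff_notMem.2 hA))

theorem tendsto_nhds_of_eventually_tendsto (hX : IsR2Space X) (hd_inj : Injective d)
    (hd_disc : DiscreteTopology (range d)) {p : Ultrafilter ℕ} {x : X} (hd : Tendsto d p (𝓝 x))
    {ι : Type*} {l : Filter ι} {e : ι → X} (he : Tendsto e l (𝓝 x)) {v : ι → Ultrafilter ℕ}
    (hv : ∀ᶠ i in l, Tendsto d (v i) (𝓝 (e i))) : Tendsto v l (𝓝 p) := by
  rw [ultrafilterBasis_is_basis.nhds_hasBasis.tendsto_right_iff]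
  rintro _ ⟨⟨A, rfl⟩, hA⟩
  have hx : x ∉ closure (d '' Aᶜ) := fun h =>
    Ultrafilter.compl_mem_iff_notMem.1 ((hX.mem_iff_mem_closure_image hd_inj hd_disc hd _).2 h) hA
  filter_upwards [hv, he (isClosed_closure.isOpen_compl.mem_nhds hx)] with i hvi hei
  exact Ultrafilter.compl_notMem_iff.1 fun h => hei (mem_closure_image_of_tendsto hvi h)

theorem not_eventually_mem_remainder [T2Space X] (hX : IsR2Space X) (hd_inj : Injective d)
    (hd_disc : DiscreteTopology (range d)) {p : omegaStar} (hp : IsWeakPPoint p) {x : X}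
    (hd : Tendsto d (p : Ultrafilter ℕ) (𝓝 x)) {q : Ultrafilter ℕ} {e : ℕ → X}
    (he : Tendsto e q (𝓝 x)) : ¬∀ᶠ n in q, e n ∈ closure (range d) \ range d ∧ e n ≠ x := by
  intro h
  have : Nonempty omegaStar := ⟨p⟩
  choose! u hu using fun y (hy : y ∈ closure (range d) \ range d) => exists_tendsto_omegaStar hy
  refine hp.not_tendsto (h.mono fun n hn hnp => hn.2 ?_) (tendsto_subtype_rng.2 <|
    hX.tendsto_nhds_of_eventually_tendsto hd_inj hd_disc hd he (h.mono fun n hn => hu _ hn.1))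
  exact tendsto_nhds_unique (hu _ hn.1) (hnp ▸ hd)

theorem exists_apply_mem_closure_or_mem (hX : IsR2Space X)
    (hd_disc : DiscreteTopology (range d)) {W : ℕ → Set X} (hWo : ∀ a, IsOpen (W a))
    (hdW : ∀ a, d a ∈ W a) {e : ℕ → X} {A B : Set ℕ} {x : X} (hxA : x ∈ closure (d '' A))
    (hxB : x ∈ closure (e '' B)) : ∃ n ∈ B, e n ∈ closure (d '' A) ∨ ∃ a ∈ A, e n ∈ W a := by
  by_contra! h
  refine disjoint_left.1 (hX.disjoint_closure_image hd_disc ?_ ?_) hxA hxB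
  · rw [disjoint_right]
    rintro _ ⟨n, hn, rfl⟩
    exact (h n hn).1
  · rw [disjoint_left]
    rintro _ ⟨a, ha, rfl⟩ hda
    obtain ⟨_, hW, n, hn, rfl⟩ := mem_closure_iff.1 hda (W a) (hWo a) (hdW a)
    exact (h n hn).2 a ha hW

theorem exists_map_eq_of_eventually_notMem_remainder [RegularSpace X] (hX : IsR2Space X)
    (hd_inj : Injective d) (hd_disc : DiscreteTopology (range d)) {p : Ultrafilter ℕ} {x : X}
    (hd : Tendsto d p (𝓝 x)) {q : Ultrafilter ℕ} {e : ℕ → X} (he : Tendsto e q (𝓝 x))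
    (h : ∀ᶠ n in q, e n ∉ closure (range d) \ range d) : ∃ g : ℕ → ℕ, Ultrafilter.map g q = p := by
  obtain ⟨W, hWo, hdW, hWd⟩ := exists_isOpen_pairwise_disjoint hd_inj hd_disc
  have hW_eq {a b : ℕ} {y : X} (ha : y ∈ W a) (hb : y ∈ W b) : a = b :=
    by_contra fun hab => disjoint_left.1 (hWd hab) ha hb
  have hxA {A : Set ℕ} (hA : A ∈ p) : x ∈ closure (d '' A) := mem_closure_image_of_tendsto hd hA
  have hxB {B : Set ℕ} (hB : B ∈ q) : x ∈ closure (e '' B) := mem_closure_image_of_tendsto he hB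
  have hmem {A : Set ℕ} {n : ℕ} (hn : e n ∉ closure (range d) \ range d)
      (hA : e n ∈ closure (d '' A)) : ∃ k ∈ A, d k = e n := by
    obtain ⟨k, hk⟩ : e n ∈ range d :=
      not_not.1 fun hr => hn ⟨closure_mono (image_subset_range d A) hA, hr⟩
    exact ⟨k, (apply_mem_closure_image_iff hd_inj hd_disc).1 (hk ▸ hA), hk⟩
  have hcover : ∀ᶠ n in q, ∃ a, e n ∈ W a := by
    by_contra hne
    obtain ⟨n, ⟨hn, hnW⟩, hcl | ⟨a, -, ha⟩⟩ := hX.exists_apply_mem_closure_or_mem hd_disc hWo hdW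
      (hxA univ_mem) (hxB (h.and (Ultrafilter.eventually_not.2 hne)))
    · obtain ⟨k, -, hk⟩ := hmem hn hcl
      exact hnW ⟨k, hk ▸ hdW k⟩
    · exact hnW ⟨a, ha⟩
  choose! g hg using fun n (hn : ∃ a, e n ∈ W a) => hn
  refine ⟨g, Ultrafilter.coe_le_coe.1 fun A hA => ?_⟩
  show g ⁻¹' A ∈ q
  by_contra hgA
  obtain ⟨n, ⟨⟨hn, hnW⟩, hnA⟩, hcl | ⟨a, ha, haW⟩⟩ := hX.exists_apply_mem_closure_or_mem hd_disc
    hWo hdW (hxA hA) (hxB ((h.and hcover).and (Ultrafilter.compl_mem_iff_notMem.2 hgA)))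
  · obtain ⟨k, hk, hek⟩ := hmem hn hcl
    exact hnA (show g n ∈ A from hW_eq (hek ▸ hdW k) (hg n hnW) ▸ hk)
  · exact hnA (show g n ∈ A from hW_eq haW (hg n hnW) ▸ ha)

end IsR2Space

end

theorem rudinKeisler_le_of_R2_general (X : Type*) [TopologicalSpace X] [CompactSpace X] [T2Space X]
    (hX : IsR2Space X)
    (p q : Ultrafilter ℕ) (hp : ∀ n : ℕ, p ≠ pure n)
    (hwp : ∀ D : Set ↥omegaStar, D.Countable → (⟨p, hp⟩ : ↥omegaStar) ∉ D →
      (⟨p, hp⟩ : ↥omegaStar) ∉ closure D)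
    (x : X) (d : ℕ → X) (hd_inj : Function.Injective d)
    (hd_disc : DiscreteTopology ↥(Set.range d))
    (e : ℕ → X)
    (hd_lim : Filter.Tendsto d ↑p (𝓝 x))
    (he_lim : Filter.Tendsto e ↑q (𝓝 x))
    (hne : {n : ℕ | e n = x} ∉ q) :
    ∃ g : ℕ → ℕ, Ultrafilter.map g q = p := by
  by_cases h : ∀ᶠ n in q, e n ∉ closure (Set.range d) \ Set.range d
  · exact hX.exists_map_eq_of_eventually_notMem_remainder hd_inj hd_disc hd_lim he_lim h
  · refine absurd ?_ <|
      hX.not_eventually_mem_remainder hd_inj hd_disc (p := ⟨p, hp⟩) hwp hd_lim he_lim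
    exact ((Ultrafilter.eventually_not.2 h).mono fun _ => not_not.1).and
      (Ultrafilter.compl_mem_iff_notMem.2 hne)

/-- Let `X` be a compact Hausdorff R₂-space, `p` a nonprincipal ultrafilter
which is a weak P-point of `ω*`, `q` a nonprincipal ultrafilter, `(d m)` an injective
discrete sequence in `X`, `(e n)` any sequence in `X`, with `x` both the `p`-limit of
`(d m)` and the `q`-limit of `(e n)`, and `{n : e n = x} ∉ q`. Then `p ≤_RK q`. -/
theorem rudinKeisler_le_of_R2 (X : Type*) [TopologicalSpace X] [CompactSpace X] [T2Space X]
    (hX : IsR2Space X)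
    (p q : Ultrafilter ℕ) (hp : ∀ n : ℕ, p ≠ pure n) (hq : ∀ n : ℕ, q ≠ pure n)
    (hwp : ∀ D : Set ↥omegaStar, D.Countable → (⟨p, hp⟩ : ↥omegaStar) ∉ D →
      (⟨p, hp⟩ : ↥omegaStar) ∉ closure D)
    (x : X) (d : ℕ → X) (hd_inj : Function.Injective d)
    (hd_disc : DiscreteTopology ↥(Set.range d))
    (e : ℕ → X)
    (hd_lim : Filter.Tendsto d ↑p (𝓝 x))
    (he_lim : Filter.Tendsto e ↑q (𝓝 x))
    (hne : {n : ℕ | e n = x} ∉ q) :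
    ∃ g : ℕ → ℕ, Ultrafilter.map g q = p :=
  rudinKeisler_le_of_R2_general X hX p q hp hwp x d hd_inj hd_disc e hd_lim he_lim hne
end

section
/- Let X be a compact Hausdorff βω-space. Let p be a nonprincipal ultrafilter on ℕ which is a discretely weak P-point of the subspace ω* of nonprincipal ultrafilters on ℕ, and let q be a nonprincipal discrete ultrafilter on ℕ. Suppose x ∈ X, (d_m) is an injective sequence in X whose range is a discrete subspace, (e_n) is any sequence in X, x is the p-limit of (d_m) and also the q-limit of (e_n), and {n : e_n = x} ∉ q. Then p ≤_RK q. -/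
/-!
In a compact βω-space, disjoint subsets of a countable discrete set `S` have disjoint closures
(extend their indicator function), so an ultrafilter on `X` that contains `S` and converges to
`x` contains every subset of `S` whose closure contains `x`. In particular the continuous
extension `βℕ → X` of `d` is a closed embedding.

The countable Tychonoff space `range e` injects continuously into `ℝ`, so discreteness of `q`
gives `B ∈ q` with `e '' B` discrete. Now split according to where `q`-many `e n` lie.
* In `range d`, or outside `closure (range d)`: take pairwise disjoint neighbourhoods of the
  points `d m`; their traces on `range d` (resp. `e '' B`) are distributed in `q.map e` as the
  indices `m` are in `p`, so collapsing the `m`-th one to `m` maps `q.map e` to `p`. In the second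
  case `p`-many `d m` lie in `closure (e '' B)`, since otherwise these points and `e '' B` would
  be disjoint halves of a C*-embedded set both accumulating at `x`.
* In `closure (range d) \ range d`: the ultrafilters along which `d` converges to these `e n`
  form a countable discrete subset of `ω*` accumulating at `p`, which is impossible for a
  discretely weak P-point.
-/

open Filter Topology

open Set Function

theorem Cardinal.continuous_cantorFunction {c : ℝ} (h0 : 0 ≤ c) (h1 : c < 1) :
    Continuous (Cardinal.cantorFunction c) := by
  refine continuous_tsum (fun n => ?_) (summable_geometric_of_lt_one h0 h1) fun n f => ?_
  · exact (continuous_of_discreteTopology (f := fun b : Bool => cond b (c ^ n) 0)).comp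
      (continuous_apply n)
  · unfold Cardinal.cantorFunctionAux
    cases f n <;> simp [abs_of_nonneg h0, pow_nonneg h0]

section CountableTychonoff

variable {Y : Type*} [TopologicalSpace Y] [T35Space Y]

theorem exists_isClopen_mem_notMem [Countable Y] {a b : Y} (hab : a ≠ b) :
    ∃ U : Set Y, IsClopen U ∧ a ∈ U ∧ b ∉ U := by
  obtain ⟨f, hf, hfa, hfb⟩ :=
    CompletelyRegularSpace.completely_regular a {b} isClosed_singleton hab
  set g : Y → ℝ := fun y => f y
  have hg : Continuous g := continuous_subtype_val.comp hf
  -- a level `r` missed by the countable range of `g` cuts `Y` into two clopen pieces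
  obtain ⟨r, hr, hr01⟩ := ((countable_range g).dense_compl ℝ).exists_mem_open isOpen_Ioo
    (nonempty_Ioo.2 zero_lt_one)
  have hlt : g ⁻¹' Iio r = g ⁻¹' Iic r := by
    ext y
    simp only [mem_preimage, mem_Iio, mem_Iic]
    exact ⟨le_of_lt, fun h => lt_of_le_of_ne h fun h' => hr ⟨y, h'⟩⟩
  refine ⟨g ⁻¹' Iio r, ⟨hlt ▸ isClosed_Iic.preimage hg, isOpen_Iio.preimage hg⟩, ?_, ?_⟩
  · simpa [g, hfa] using hr01.1
  · simpa [g, hfb rfl] using hr01.2.le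

theorem exists_continuous_injective_real [Countable Y] :
    ∃ f : Y → ℝ, Continuous f ∧ Injective f := by
  choose U hU using fun ab : {ab : Y × Y // ab.1 ≠ ab.2} => exists_isClopen_mem_notMem ab.2
  have : HasCountableSeparatingOn Y IsClopen univ :=
    ⟨range U, countable_range U, forall_mem_range.2 fun ab => (hU ab).1,
      fun a _ b _ h => by_contra fun hab => (hU ⟨(a, b), hab⟩).2.2
        ((h _ (mem_range_self _)).1 (hU ⟨(a, b), hab⟩).2.1)⟩
  obtain ⟨S, hS, hsep⟩ := exists_seq_separating Y isClopen_empty univ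
  refine ⟨Cardinal.cantorFunction (1 / 3) ∘ fun y n => (S n).boolIndicator y,
    (Cardinal.continuous_cantorFunction (by norm_num) (by norm_num)).comp
      (continuous_pi fun n => (continuous_boolIndicator_iff_isClopen _).2 (hS n)),
    (Cardinal.cantorFunction_injective (by norm_num) (by norm_num)).comp fun a b h =>
      hsep a trivial b trivial fun n => ?_⟩
  simpa [Set.boolIndicator] using congr_fun h n

theorem Set.Countable.exists_continuousOn_injOn_real_s17 {s : Set Y} (hs : s.Countable) :
    ∃ f : Y → ℝ, ContinuousOn f s ∧ InjOn f s := by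
  have := hs.to_subtype
  obtain ⟨f, hf, hinj⟩ := exists_continuous_injective_real (Y := s)
  refine ⟨extend Subtype.val f 0, ?_, fun a ha b hb hab => ?_⟩
  · rw [continuousOn_iff_continuous_domRestrict]
    convert hf
    ext y
    exact Subtype.val_injective.extend_apply f 0 y
  · have := hinj (a₁ := ⟨a, ha⟩) (a₂ := ⟨b, hb⟩) (by
      simpa [Subtype.val_injective.extend_apply f 0 ⟨a, ha⟩,
        Subtype.val_injective.extend_apply f 0 ⟨b, hb⟩] using hab)
    exact congr_arg Subtype.val this

end CountableTychonoff

section DiscreteSubsets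

variable {X : Type*} [TopologicalSpace X]

theorem DiscreteTopology.of_continuousOn_injOn {Y : Type*} [TopologicalSpace Y] {f : X → Y}
    {s : Set X} (hf : ContinuousOn f s) (hinj : InjOn f s) (h : DiscreteTopology (f '' s)) :
    DiscreteTopology s :=
  .of_continuous_injective (hf.mapsToRestrict (mapsTo_image f s))
    ((mapsTo_image f s).restrict_inj.2 hinj)

theorem DiscreteTopology.union {s t : Set X} [DiscreteTopology s] [DiscreteTopology t]
    (hs : Disjoint s (closure t)) (ht : Disjoint t (closure s)) : DiscreteTopology ↥(s ∪ t) := by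
  have key : ∀ {a b : Set X}, DiscreteTopology a → Disjoint a (closure b) →
      ∀ z ∈ a, 𝓝[≠] z ⊓ 𝓟 (a ∪ b) = ⊥ := fun ha hab z hz => by
    rw [← sup_principal, inf_sup_left, discreteTopology_subtype_iff.1 ha z hz, bot_sup_eq,
      ← le_bot_iff, ← notMem_closure_iff_nhdsWithin_eq_bot.1 (disjoint_left.1 hab hz)]
    exact inf_le_inf_right _ nhdsWithin_le_nhds
  refine discreteTopology_subtype_iff.2 fun z hz => ?_
  rcases hz with hzs | hzt
  · exact key inferInstance hs z hzs
  · rw [union_comm]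
    exact key inferInstance ht z hzt

theorem exists_pairwise_disjoint_nhds [RegularSpace X] {d : ℕ → X} (hd : Injective d)
    [DiscreteTopology (range d)] :
    ∃ N : ℕ → Set X, (∀ m, N m ∈ 𝓝 (d m)) ∧ Pairwise (Disjoint on N) := by
  have hK : ∀ m, ∃ K ∈ 𝓝 (d m), IsClosed K ∧ ∀ j, d j ∈ K → j = m := fun m => by
    let z : range d := ⟨d m, m, rfl⟩
    obtain ⟨V, hV, hVd⟩ := (mem_nhds_subtype _ z _).1 ((isOpen_discrete {z}).mem_nhds rfl)
    obtain ⟨K, hK, hKc, hKV⟩ := exists_mem_nhds_isClosed_subset hV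
    refine ⟨K, hK, hKc, fun j hj => hd ?_⟩
    exact congr_arg Subtype.val (hVd (hKV hj) : (⟨d j, j, rfl⟩ : range d) = z)
  choose K hK hKc hKd using hK
  refine ⟨disjointed K, fun m => ?_, disjoint_disjointed K⟩
  rw [disjointed_eq_inter_compl]
  exact inter_mem (hK m) ((biInter_mem (finite_Iio m)).2 fun j hj =>
    (hKc j).isOpen_compl.mem_nhds fun h => (ne_of_lt hj) (hKd j m h).symm)

end DiscreteSubsets

theorem Ultrafilter.exists_map_eq_of_pairwise_disjoint {α β : Type*} {u : Ultrafilter β}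
    {p : Ultrafilter α} {N : α → Set β} (hN : Pairwise (Disjoint on N))
    (h : ∀ A ∈ p, ⋃ m ∈ A, N m ∈ u) : ∃ g : β → α, u.map g = p := by
  classical
  have := nonempty_of_neBot (p : Filter α)
  refine ⟨fun b => if hb : ∃ m, b ∈ N m then hb.choose else Classical.arbitrary α,
    Ultrafilter.coe_le_coe.1 fun A hA => (u.map _).mem_coe.2 <| Ultrafilter.mem_map.2 <|
      mem_of_superset (h A hA) ?_⟩
  intro b hb
  obtain ⟨m, hmA, hbm⟩ := mem_iUnion₂.1 hb
  have hb : ∃ m, b ∈ N m := ⟨m, hbm⟩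
  have : hb.choose = m := by_contra fun hne => disjoint_left.1 (hN hne) hb.choose_spec hbm
  simpa [mem_preimage, dif_pos hb, this] using hmA

section CStarEmbedded

variable {X : Type*} [TopologicalSpace X]

theorem CStarEmbedded.disjoint_closure {S s t : Set X} (hS : CStarEmbedded S)
    [DiscreteTopology S] (hs : s ⊆ S) (ht : t ⊆ S) (hst : Disjoint s t) :
    Disjoint (closure s) (closure t) := by
  classical
  obtain ⟨g, hg⟩ := hS ⟨fun z => if (z : X) ∈ s then 1 else 0, continuous_of_discreteTopology⟩
    ⟨1, fun z => by simp only [ContinuousMap.coe_mk]; split_ifs <;> simp⟩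
  have h1 : closure s ⊆ g ⁻¹' {1} := closure_minimal
    (fun z hz => by simpa [hz] using hg ⟨z, hs hz⟩) (isClosed_singleton.preimage g.continuous)
  have h0 : closure t ⊆ g ⁻¹' {0} := closure_minimal
    (fun z hz => by simpa [disjoint_right.1 hst hz] using hg ⟨z, ht hz⟩)
    (isClosed_singleton.preimage g.continuous)
  exact ((disjoint_singleton.2 one_ne_zero).preimage g).mono h1 h0

theorem CStarEmbedded.mem_of_mem_closure {S Y : Set X} (hS : CStarEmbedded S)
    [DiscreteTopology S] {u : Ultrafilter X} {x : X} (hu : ↑u ≤ 𝓝 x) (hSu : S ∈ u)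
    (hYS : Y ⊆ S) (hx : x ∈ closure Y) : Y ∈ u := by
  by_contra hY
  have hx' : x ∈ closure (S \ Y) :=
    mem_closure_iff_ultrafilter.2 ⟨u, inter_mem hSu (Ultrafilter.compl_mem_iff_notMem.2 hY), hu⟩
  exact disjoint_left.1 (hS.disjoint_closure hYS sdiff_subset disjoint_sdiff_right) hx hx'

theorem CStarEmbedded.exists_map_eq {S : Set X} (hS : CStarEmbedded S) [DiscreteTopology S]
    {α : Type*} {p : Ultrafilter α} {u : Ultrafilter X} {x : X} (hu : ↑u ≤ 𝓝 x)
    (hSu : S ∈ u) {N : α → Set X} (hN : Pairwise (Disjoint on N))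
    (hx : ∀ A ∈ p, x ∈ closure (S ∩ ⋃ m ∈ A, N m)) : ∃ g : X → α, u.map g = p :=
  Ultrafilter.exists_map_eq_of_pairwise_disjoint hN fun A hA =>
    mem_of_superset (hS.mem_of_mem_closure hu hSu inter_subset_left (hx A hA)) inter_subset_right

theorem IsBetaOmegaSpace.cStarEmbedded [CompactSpace X] (hX : IsBetaOmegaSpace X)
    {S : Set X} (hS : S.Countable) [DiscreteTopology S] : CStarEmbedded S :=
  hX S hS ‹_› isClosed_closure.isCompact

variable [CompactSpace X] [T2Space X]

theorem closure_range_subset_range_ultrafilter_extend {α : Type*} (f : α → X) :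
    closure (range f) ⊆ range (Ultrafilter.extend f) :=
  closure_minimal (by rintro _ ⟨a, rfl⟩; exact ⟨pure a, ultrafilter_extend_pure f a⟩)
    (isCompact_range (continuous_ultrafilter_extend f)).isClosed

theorem CStarEmbedded.isClosedEmbedding_ultrafilter_extend {α : Type*} {f : α → X}
    (hf : Injective f) [DiscreteTopology (range f)] (hS : CStarEmbedded (range f)) :
    IsClosedEmbedding (Ultrafilter.extend f) := by
  refine (continuous_ultrafilter_extend f).isClosedEmbedding fun u v huv => ?_
  have hu : ↑(u.map f) ≤ 𝓝 (Ultrafilter.extend f v) := ultrafilter_extend_eq_iff.1 huv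
  have hv : ↑(v.map f) ≤ 𝓝 (Ultrafilter.extend f v) := ultrafilter_extend_eq_iff.1 rfl
  refine Ultrafilter.coe_le_coe.1 fun A hA => ?_
  have := hS.mem_of_mem_closure hu range_mem_map (image_subset_range f A)
    (mem_closure_iff_ultrafilter.2 ⟨v.map f, image_mem_map hA, hv⟩)
  simpa [hf.preimage_image] using this

end CStarEmbedded

theorem exists_mem_discreteTopology_image {X : Type*} [TopologicalSpace X] [T35Space X]
    {q : Ultrafilter ℕ} (hq : ∀ f : ℕ → ℝ, ∃ A ∈ q, DiscreteTopology ↥(f '' A))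
    (e : ℕ → X) : ∃ B ∈ q, DiscreteTopology ↥(e '' B) := by
  obtain ⟨f, hf, hinj⟩ := (countable_range e).exists_continuousOn_injOn_real_s17
  obtain ⟨B, hB, hdisc⟩ := hq (f ∘ e)
  refine ⟨B, hB, .of_continuousOn_injOn (hf.mono (image_subset_range e B))
    (hinj.mono (image_subset_range e B)) ?_⟩
  rwa [← image_comp]

section RudinKeisler

variable {X : Type*} [TopologicalSpace X] {p q : Ultrafilter ℕ} {x : X} {d e : ℕ → X}

theorem exists_map_eq_of_mem_range (hd : Injective d) [DiscreteTopology (range d)]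
    (hD : CStarEmbedded (range d)) (hdp : Tendsto d p (𝓝 x)) (heq : Tendsto e q (𝓝 x))
    (hrange : {n | e n ∈ range d} ∈ q) : ∃ g : ℕ → ℕ, q.map g = p := by
  have hx : ∀ A ∈ p, x ∈ closure (range d ∩ ⋃ m ∈ A, {d m}) := fun A hA => by
    refine closure_mono ?_
      (mem_closure_of_tendsto hdp (mem_of_superset hA (subset_preimage_image d A)))
    rintro _ ⟨m, hm, rfl⟩
    exact ⟨mem_range_self m, mem_iUnion₂.2 ⟨m, hm, rfl⟩⟩
  obtain ⟨G, hG⟩ := hD.exists_map_eq (u := q.map e) heq hrange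
    (fun i j hij => disjoint_singleton.2 (hd.ne hij)) hx
  exact ⟨G ∘ e, by rw [← Ultrafilter.map_map, hG]⟩

variable [CompactSpace X] [T2Space X]

theorem exists_countable_discreteTopology_omegaStar_mem_closure (hd : Injective d)
    [DiscreteTopology (range d)] (hD : CStarEmbedded (range d)) (hp : ∀ n, p ≠ pure n)
    (hdp : Tendsto d p (𝓝 x)) (heq : Tendsto e q (𝓝 x)) {B : Set ℕ} (hB : B ∈ q)
    [DiscreteTopology (e '' B)] (hBx : ∀ n ∈ B, e n ≠ x)
    (hBd : ∀ n ∈ B, e n ∈ closure (range d) \ range d) :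
    ∃ D : Set omegaStar, D.Countable ∧ DiscreteTopology D ∧
      (⟨p, hp⟩ : omegaStar) ∉ D ∧ (⟨p, hp⟩ : omegaStar) ∈ closure D := by
  set ι : omegaStar → X := Ultrafilter.extend d ∘ Subtype.val
  have hι : IsEmbedding ι :=
    (hD.isClosedEmbedding_ultrafilter_extend hd).isEmbedding.comp IsEmbedding.subtypeVal
  have hιp : ι ⟨p, hp⟩ = x := ultrafilter_extend_eq_iff.2 hdp
  have hE : e '' B ⊆ range ι := by
    rintro _ ⟨n, hn, rfl⟩
    obtain ⟨v, hv⟩ := closure_range_subset_range_ultrafilter_extend d (hBd n hn).1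
    refine ⟨⟨v, fun k hk => (hBd n hn).2 ⟨k, ?_⟩⟩, hv⟩
    rw [← hv, hk, ultrafilter_extend_pure]
  refine ⟨ι ⁻¹' (e '' B), (B.to_countable.image e).preimage hι.injective,
    .of_continuousOn_injOn hι.continuous.continuousOn hι.injective.injOn ?_,
    fun ⟨n, hn, h⟩ => hBx n hn (h.trans hιp), ?_⟩
  · rwa [image_preimage_eq_of_subset hE]
  · rw [hι.isInducing.closure_eq_preimage_closure_image, image_preimage_eq_of_subset hE,
      mem_preimage, hιp]
    exact mem_closure_of_tendsto heq (mem_of_superset hB (subset_preimage_image e B))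

theorem exists_map_eq_of_notMem_closure_range (hX : IsBetaOmegaSpace X) (hd : Injective d)
    [DiscreteTopology (range d)] (hdp : Tendsto d p (𝓝 x)) (heq : Tendsto e q (𝓝 x))
    {B : Set ℕ} (hB : B ∈ q) [DiscreteTopology (e '' B)]
    (hBd : ∀ n ∈ B, e n ∉ closure (range d)) : ∃ g : ℕ → ℕ, q.map g = p := by
  have hE : CStarEmbedded (e '' B) := hX.cStarEmbedded (B.to_countable.image e)
  have hEu : e '' B ∈ q.map e :=
    Ultrafilter.mem_map.2 (mem_of_superset hB (subset_preimage_image e B))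
  set P := {m | d m ∈ closure (e '' B)}
  by_cases hP : P ∈ p
  · obtain ⟨N, hNd, hN⟩ := exists_pairwise_disjoint_nhds hd
    have hx : ∀ A ∈ p, x ∈ closure (e '' B ∩ ⋃ m ∈ A, N m) := fun A hA => by
      refine closure_minimal ?_ isClosed_closure (mem_closure_of_tendsto hdp
        (mem_of_superset (inter_mem hA hP) (subset_preimage_image d _)))
      rintro _ ⟨m, ⟨hmA, hmP⟩, rfl⟩
      refine closure_mono (inter_subset_inter_right _ (subset_biUnion_of_mem hmA)) ?_
      refine mem_closure_iff_nhds.2 fun t ht => ?_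
      obtain ⟨z, ⟨hzt, hzN⟩, hzE⟩ := mem_closure_iff_nhds.1 hmP _ (inter_mem ht (hNd m))
      exact ⟨z, hzt, hzE, hzN⟩
    obtain ⟨G, hG⟩ := hE.exists_map_eq (u := q.map e) heq hEu hN hx
    exact ⟨G ∘ e, by rw [← Ultrafilter.map_map, hG]⟩
  · have hPc : Pᶜ ∈ p := Ultrafilter.compl_mem_iff_notMem.2 hP
    have hPE : Disjoint (d '' Pᶜ) (closure (e '' B)) := by
      rw [disjoint_left]
      rintro _ ⟨m, hm, rfl⟩
      exact hm
    have hEP : Disjoint (e '' B) (closure (d '' Pᶜ)) := by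
      rw [disjoint_left]
      rintro _ ⟨n, hn, rfl⟩ h
      exact hBd n hn (closure_mono (image_subset_range d _) h)
    have := DiscreteTopology.of_subset ‹DiscreteTopology (range d)› (image_subset_range d Pᶜ)
    have := DiscreteTopology.union hPE hEP
    have hS := hX.cStarEmbedded (((to_countable Pᶜ).image d).union (B.to_countable.image e))
    have hPu := hS.mem_of_mem_closure (u := q.map e) heq (mem_of_superset hEu subset_union_right)
      subset_union_left
      (mem_closure_of_tendsto hdp (mem_of_superset hPc (subset_preimage_image d _)))
    exact absurd ((hPE.mono_right subset_closure).inter_eq ▸ inter_mem hPu hEu)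
      Ultrafilter.empty_notMem

end RudinKeisler

theorem rudinKeisler_le_of_betaOmega_general (X : Type*) [TopologicalSpace X] [CompactSpace X]
    [T2Space X] (hX : IsBetaOmegaSpace X)
    (p q : Ultrafilter ℕ) (hp : ∀ n : ℕ, p ≠ pure n)
    (hdwp : ∀ D : Set ↥omegaStar, D.Countable → DiscreteTopology ↥D →
      (⟨p, hp⟩ : ↥omegaStar) ∉ D → (⟨p, hp⟩ : ↥omegaStar) ∉ closure D)
    (hq_disc : ∀ f : ℕ → ℝ, ∃ A ∈ q, DiscreteTopology ↥(f '' A))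
    (x : X) (d : ℕ → X) (hd_inj : Function.Injective d)
    (hd_disc : DiscreteTopology ↥(Set.range d))
    (e : ℕ → X)
    (hd_lim : Filter.Tendsto d ↑p (𝓝 x))
    (he_lim : Filter.Tendsto e ↑q (𝓝 x))
    (hne : {n : ℕ | e n = x} ∉ q) :
    ∃ g : ℕ → ℕ, Ultrafilter.map g q = p := by
  have hD : CStarEmbedded (range d) := hX.cStarEmbedded (countable_range d)
  obtain ⟨B, hB, hBdisc⟩ := exists_mem_discreteTopology_image hq_disc e
  by_cases hrange : {n | e n ∈ range d} ∈ q
  · exact exists_map_eq_of_mem_range hd_inj hD hd_lim he_lim hrange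
  by_cases hclosure : {n | e n ∈ closure (range d)} ∈ q
  · set B' := B ∩ {n | e n = x}ᶜ ∩ ({n | e n ∈ closure (range d)} ∩ {n | e n ∈ range d}ᶜ)
    have hB' : B' ∈ q := inter_mem (inter_mem hB (Ultrafilter.compl_mem_iff_notMem.2 hne))
      (inter_mem hclosure (Ultrafilter.compl_mem_iff_notMem.2 hrange))
    have : DiscreteTopology (e '' B') := hBdisc.of_subset (image_mono fun n hn => hn.1.1)
    obtain ⟨D, hDc, hDd, hpD, hpD'⟩ := exists_countable_discreteTopology_omegaStar_mem_closure
      hd_inj hD hp hd_lim he_lim hB' (fun n hn => hn.1.2) fun n hn => hn.2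
    exact absurd hpD' (hdwp D hDc hDd hpD)
  · set B' := B ∩ {n | e n ∈ closure (range d)}ᶜ
    have : DiscreteTopology (e '' B') := hBdisc.of_subset (image_mono inter_subset_left)
    exact exists_map_eq_of_notMem_closure_range hX hd_inj hd_lim he_lim
      (inter_mem hB (Ultrafilter.compl_mem_iff_notMem.2 hclosure)) fun n hn => hn.2

/-- Let `X` be a compact Hausdorff βω-space, `p` a nonprincipal ultrafilter
which is a discretely weak P-point of `ω*`, `q` a nonprincipal discrete ultrafilter,
`(d m)` an injective discrete sequence in `X`, `(e n)` any sequence in `X`, with `x` both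
the `p`-limit of `(d m)` and the `q`-limit of `(e n)`, and `{n : e n = x} ∉ q`.
Then `p ≤_RK q`. -/
theorem rudinKeisler_le_of_betaOmega (X : Type*) [TopologicalSpace X] [CompactSpace X]
    [T2Space X] (hX : IsBetaOmegaSpace X)
    (p q : Ultrafilter ℕ) (hp : ∀ n : ℕ, p ≠ pure n) (hq : ∀ n : ℕ, q ≠ pure n)
    (hdwp : ∀ D : Set ↥omegaStar, D.Countable → DiscreteTopology ↥D →
      (⟨p, hp⟩ : ↥omegaStar) ∉ D → (⟨p, hp⟩ : ↥omegaStar) ∉ closure D)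
    (hq_disc : ∀ f : ℕ → ℝ, ∃ A ∈ q, DiscreteTopology ↥(f '' A))
    (x : X) (d : ℕ → X) (hd_inj : Function.Injective d)
    (hd_disc : DiscreteTopology ↥(Set.range d))
    (e : ℕ → X)
    (hd_lim : Filter.Tendsto d ↑p (𝓝 x))
    (he_lim : Filter.Tendsto e ↑q (𝓝 x))
    (hne : {n : ℕ | e n = x} ∉ q) :
    ∃ g : ℕ → ℕ, Ultrafilter.map g q = p :=
  rudinKeisler_le_of_betaOmega_general X hX p q hp hdwp hq_disc x d hd_inj hd_disc e hd_lim he_lim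
    hne
end
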